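/- Fix integers n ≥ 1 and 1 ≤ h ≤ n, and a real θ ∈ (0,1); take λ = 1 and l = h−1. Let c^{(1,θ)}_{n,h,h−1} denote the coefficient of the monomial k^{n−h} (i.e., j^0 k^{n−h}) in the coefficient q^{(n,h)}_{n−h} of the quotient polynomial Q_{n,h,h−1}. Then c^{(1,θ)}_{n,h,h−1} = (1−θ)^n θ^{n−1} C(2n, n−h). -/

import Mathlib

/-!
Specialize `j = 0`, `k = t` and substitute `d = x s`, `t = s`: the `s`-degree becomes the total
degree in `(d, t)` and the coefficient of the top power of `s` is the top homogeneous part,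
dehomogenized at `t = 1`. The top part `θ^(h+1) x^(2h+1) (x+1)^(n+h+1)` of the divisor has full
`d`-degree, so the quotient has total degree at most `n - h`, and its top part is the quotient of
`(1-θ)^h x^(2h+2) (θx+1)^(2n)` by that of the divisor. The wanted coefficient is the value of this
top quotient at `x = 0`. Writing `θx + 1 = θ(x+1) + (1-θ)`, the quotient of `x (θx+1)^(2n)` by
`(x+1)^(n+h+1)` evaluated at `x = 0` telescopes to the binomial term
`C(2n, n+h) θ^(n+h) (1-θ)^(n-h)`.
-/

open Polynomial

/-- Rising factorial in a commutative ring: `(a)_m = a (a+1) ⋯ (a+m−1)`, with `(a)_0 = 1`. -/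
noncomputable def rfp {S : Type*} [CommRing S] (a : S) (m : ℕ) : S :=
  ∏ i ∈ Finset.range m, (a + (i : S))

/-- The base ring `R = ℝ[j,k]`. -/
abbrev R2 : Type := MvPolynomial (Fin 2) ℝ

/-- The variable `j` as a constant of `R[d]`. -/
noncomputable def Jv : Polynomial R2 := Polynomial.C (MvPolynomial.X 0)

/-- The variable `k` as a constant of `R[d]`. -/
noncomputable def Kv : Polynomial R2 := Polynomial.C (MvPolynomial.X 1)

/-- Embedding of real scalars into `R[d]`. -/
noncomputable def cst (x : ℝ) : Polynomial R2 := Polynomial.C (MvPolynomial.C x)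

/-- The dividend `P_{n,h}` with `λ = 1` (an element of `ℝ[j,k][d]`). -/
noncomputable def Pnh (n h : ℕ) (th : ℝ) : Polynomial R2 :=
  (X - 2 * Jv - 1) * (X + 2 * (h : Polynomial R2) - 2 * Jv - 1) * rfp (X - Jv) h *
    rfp (cst (1 - th) * X - Jv) h *
    rfp (cst th * X + (h : Polynomial R2) - (n : Polynomial R2) - Jv + Kv) n *
    rfp (cst th * X + (h : Polynomial R2) - (n : Polynomial R2) - Jv + Kv) n

/-- The divisor `D_{n,h,h−1}` with `λ = 1` (case `l = h−1`). -/
noncomputable def Dnh (n h : ℕ) (th : ℝ) : Polynomial R2 :=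
  cst th * X ^ h * (X + (h : Polynomial R2) - 2 * Jv - 1) *
    rfp (cst th * X - Jv) h *
    rfp (X - (n : Polynomial R2) + (h : Polynomial R2) - 2 * Jv - 1 + Kv) (n + h + 1)

lemma MvPolynomial.coeff_aeval_piSingle_X {σ R : Type*} [CommSemiring R] [DecidableEq σ]
    (i : σ) (p : MvPolynomial σ R) (m : ℕ) :
    (aeval (Pi.single i (Polynomial.X : R[X])) p).coeff m = p.coeff (Finsupp.single i m) := by
  induction p using MvPolynomial.induction_on' with
  | monomial u a =>
    rw [aeval_monomial, coeff_monomial, Polynomial.algebraMap_eq, Polynomial.coeff_C_mul]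
    by_cases hu : u = Finsupp.single i (u i)
    · rw [hu, Finsupp.prod_single_index (by simp), Pi.single_eq_same, Polynomial.coeff_X_pow]
      by_cases hm : u i = m
      · simp [hm]
      · simp [Ne.symm hm, (Finsupp.single_injective i).ne hm]
    · obtain ⟨k, hki, hk⟩ : ∃ k, k ≠ i ∧ u k ≠ 0 := by
        by_contra! h
        exact hu (Finsupp.ext fun k => by by_cases hki : k = i <;> simp [h, hki])
      rw [Finsupp.prod, Finset.prod_eq_zero (Finsupp.mem_support_iff.2 hk)
        (by simp [Pi.single_eq_of_ne hki, zero_pow hk])]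
      have : Finsupp.single i m ≠ u := fun h => hk (by rw [← h, Finsupp.single_eq_of_ne hki])
      simp [this.symm]
  | add p q hp hq => simp [hp, hq]

lemma map_rfp {S T : Type*} [CommRing S] [CommRing T] (φ : S →+* T) (a : S) (m : ℕ) :
    φ (rfp a m) = rfp (φ a) m := by
  simp [rfp, map_prod]

namespace Polynomial

section HasTopCoeff

variable {R : Type*} [CommRing R]

def HasTopCoeff (p : R[X]) (n : ℕ) (c : R) : Prop := p.natDegree ≤ n ∧ p.coeff n = c

lemma HasTopCoeff.mul {p q : R[X]} {m n : ℕ} {a b : R} (hp : HasTopCoeff p m a)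
    (hq : HasTopCoeff q n b) : HasTopCoeff (p * q) (m + n) (a * b) :=
  ⟨natDegree_mul_le_of_le hp.1 hq.1,
    by rw [coeff_mul_add_eq_of_natDegree_le hp.1 hq.1, hp.2, hq.2]⟩

lemma HasTopCoeff.add_of_natDegree_lt {p q : R[X]} {n : ℕ} {a : R} (hp : HasTopCoeff p n a)
    (hq : q.natDegree < n) : HasTopCoeff (p + q) n a :=
  ⟨natDegree_add_le_of_degree_le hp.1 hq.le,
    by rw [coeff_add, hp.2, coeff_eq_zero_of_natDegree_lt hq, add_zero]⟩

lemma HasTopCoeff.rfp {p : R[X]} {a : R} (hp : HasTopCoeff p 1 a) (m : ℕ) :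
    HasTopCoeff (rfp p m) m (a ^ m) := by
  induction m with
  | zero => simp [_root_.rfp, HasTopCoeff]
  | succ m ih =>
    rw [_root_.rfp, Finset.prod_range_succ, ← _root_.rfp, pow_succ]
    exact ih.mul (hp.add_of_natDegree_lt (by simp))

end HasTopCoeff

section Division

variable {K : Type*} [CommRing K]

lemma coeff_C_mul_X_add_C_pow (a b : K) (N m : ℕ) :
    ((C a * X + C b) ^ N).coeff m = a ^ m * b ^ (N - m) * N.choose m := by
  have : (C a * X + C b) ^ N = ((X + C b) ^ N).comp (C a * X) := by simp [add_comm]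
  rw [this, comp_C_mul_X_coeff, coeff_X_add_C_pow]
  ring

lemma exists_X_sub_one_mul_eq (G : K[X]) (m : ℕ) :
    ∃ q r : K[X], (X - 1) * G = X ^ (m + 1) * q + r ∧ r.natDegree ≤ m ∧
      q.eval 1 = G.coeff m := by
  nontriviality K
  set A := G /ₘ X ^ m
  set B := G %ₘ X ^ m
  have hG : B + X ^ m * A = G := modByMonic_add_div G (X ^ m)
  have hB : B.degree < m := by
    simpa using degree_modByMonic_lt G (monic_X_pow (R := K) m)
  have hA : A.coeff 0 = G.coeff m := by
    rw [← hG, coeff_add, coeff_eq_zero_of_degree_lt hB, coeff_X_pow_mul', if_pos le_rfl,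
      Nat.sub_self, zero_add]
  -- Since `A = X * divX A + C (A.coeff 0)`, the term `-X ^ m * A` of `(X - 1) * X ^ m * A`
  -- leaves `-C (A.coeff 0) * X ^ m` for the remainder.
  refine ⟨A - divX A, (X - 1) * B - C (A.coeff 0) * X ^ m, ?_, ?_, ?_⟩
  · linear_combination (1 - X) * hG + X ^ m * divX_mul_X_add A
  · refine (natDegree_sub_le _ _).trans (max_le ?_ (natDegree_C_mul_X_pow_le _ _))
    rcases eq_or_ne B 0 with hB0 | hB0
    · simp [hB0]
    · have := (natDegree_lt_iff_degree_lt hB0).2 hB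
      refine (natDegree_mul_le_of_le
        (natDegree_sub_le_of_le natDegree_X_le natDegree_one.le) le_rfl).trans ?_
      omega
  · have := congrArg (eval 1) (divX_mul_X_add A)
    simp only [eval_add, eval_mul, eval_X, eval_C, mul_one] at this
    rw [eval_sub, ← hA]
    linear_combination -this

lemma exists_X_mul_comp_X_add_one_eq (G : K[X]) (m : ℕ) :
    ∃ q r : K[X], X * G.comp (X + 1) = (X + 1) ^ (m + 1) * q + r ∧ r.natDegree ≤ m ∧
      q.eval 0 = G.coeff m := by
  obtain ⟨q, r, hqr, hr, hq⟩ := exists_X_sub_one_mul_eq G m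
  refine ⟨q.comp (X + 1), r.comp (X + 1), ?_, ?_, by simpa using hq⟩
  · have := congrArg (comp · (X + 1)) hqr
    simpa only [mul_comp, sub_comp, add_comp, pow_comp, X_comp, one_comp, add_sub_cancel_right]
      using this
  · calc (r.comp (X + 1)).natDegree ≤ r.natDegree * (X + 1 : K[X]).natDegree :=
          natDegree_comp_le
      _ ≤ m * 1 := Nat.mul_le_mul hr (by compute_degree)
      _ = m := mul_one m

lemma eq_of_mul_add_eq_mul_add [IsDomain K] {p q₁ q₂ r₁ r₂ : K[X]}
    (h : p * q₁ + r₁ = p * q₂ + r₂) (h₁ : r₁.degree < p.degree) (h₂ : r₂.degree < p.degree) :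
    q₁ = q₂ := by
  by_contra hne
  have hp : p ≠ 0 := by rintro rfl; simp at h₁
  have hpq : p * (q₁ - q₂) = r₂ - r₁ := by linear_combination h
  have := (degree_sub_le r₂ r₁).trans_lt (max_lt h₂ h₁)
  rw [← hpq, degree_mul, degree_eq_natDegree hp, degree_eq_natDegree (sub_ne_zero.2 hne)] at this
  exact absurd (by exact_mod_cast this) (Nat.not_lt.2 (Nat.le_add_right _ _))

end Division

section BlowUp

variable {A S : Type*} [CommRing A] [CommRing S]

/-- The substitution `f(d, t) ↦ f(x s, s)` from `A[d]`, with `g : A → S[t]`, to `S[x][s]`: the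
`s`-degree of the image is the total degree in `(d, t)`, and its coefficient of `s ^ W` is the
degree-`W` homogeneous part of `f`, dehomogenized at `t = 1`. -/
noncomputable def blowUp (g : A →+* S[X]) : A[X] →+* S[X][X] :=
  eval₂RingHom ((mapRingHom C).comp g) (C X * X)

variable (g : A →+* S[X])

@[simp] lemma blowUp_C (a : A) : blowUp g (C a) = (g a).map C := by simp [blowUp]

@[simp] lemma blowUp_X : blowUp g X = C X * X := by simp [blowUp]

lemma coeff_coeff_blowUp (f : A[X]) (m i : ℕ) :
    ((blowUp g f).coeff m).coeff i = if i ≤ m then (g (f.coeff i)).coeff (m - i) else 0 := by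
  induction f using Polynomial.induction_on' with
  | add p q hp hq => simp only [map_add, coeff_add, hp, hq]; split_ifs <;> simp
  | monomial k a =>
    rw [← C_mul_X_pow_eq_monomial, map_mul, map_pow, blowUp_C, blowUp_X, mul_pow, ← C_pow,
      mul_left_comm, coeff_C_mul, coeff_mul_X_pow', coeff_C_mul]
    by_cases hik : i = k
    · subst hik; split_ifs <;> simp_all
    · split_ifs <;> simp [hik, coeff_X_pow]

lemma degree_coeff_blowUp_le (f : A[X]) (m : ℕ) : ((blowUp g f).coeff m).degree ≤ f.degree := by
  refine degree_le_iff_coeff_zero _ _ |>.2 fun i hi => ?_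
  simp [coeff_coeff_blowUp, coeff_eq_zero_of_degree_lt hi]

lemma coeff_blowUp_eq_mul_add {D P Q Rem : A[X]} {N m : ℕ} (hdiv : P = D * Q + Rem)
    (hD : (blowUp g D).natDegree ≤ N) (hQ : (blowUp g Q).natDegree ≤ m) :
    (blowUp g P).coeff (N + m) =
      (blowUp g D).coeff N * (blowUp g Q).coeff m + (blowUp g Rem).coeff (N + m) := by
  rw [hdiv, map_add, map_mul, coeff_add, coeff_mul_add_eq_of_natDegree_le hD hQ]

theorem natDegree_blowUp_quotient_le [IsDomain S] {D P Q Rem : A[X]} {N W : ℕ}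
    (hdiv : P = D * Q + Rem) (hRem : Rem.degree < N)
    (hD : (blowUp g D).natDegree ≤ N) (hDtop : ((blowUp g D).coeff N).degree = N)
    (hP : (blowUp g P).natDegree ≤ W) :
    (blowUp g Q).natDegree ≤ W - N := by
  -- Otherwise the top part of `D * Q` has `d`-degree at least `N`, but must cancel against the
  -- part of `Rem` of the same total degree, whose `d`-degree is less than `N`.
  by_contra! hlt
  have hQ : blowUp g Q ≠ 0 := fun h => by simp [h] at hlt
  have key := coeff_blowUp_eq_mul_add g hdiv hD le_rfl
  rw [coeff_eq_zero_of_natDegree_lt (by omega), eq_comm, add_eq_zero_iff_eq_neg] at key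
  have hlc : (blowUp g Q).leadingCoeff ≠ 0 := leadingCoeff_ne_zero.2 hQ
  have := (degree_coeff_blowUp_le g Rem (N + (blowUp g Q).natDegree)).trans_lt hRem
  rw [← degree_neg, ← key, degree_mul, hDtop, ← leadingCoeff, degree_eq_natDegree hlc] at this
  exact absurd (by exact_mod_cast this) (Nat.not_lt.2 (Nat.le_add_right N _))

end BlowUp

end Polynomial

open Polynomial

noncomputable def setJZero : R2 →+* ℝ[X] := (MvPolynomial.aeval (Pi.single 1 X)).toRingHom

local notation "Φ" => blowUp setJZero

@[simp] lemma blowUp_Jv : Φ Jv = 0 := by simp [Jv, setJZero]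

@[simp] lemma blowUp_Kv : Φ Kv = X := by simp [Kv, setJZero]

@[simp] lemma blowUp_cst (x : ℝ) : Φ (cst x) = C (C x) := by simp [cst, setJZero]

lemma coeff_zero_coeff_blowUp_setJZero (f : Polynomial R2) (m : ℕ) :
    ((Φ f).coeff m).coeff 0 = MvPolynomial.coeff (Finsupp.single 1 m) (f.coeff 0) := by
  rw [coeff_coeff_blowUp, if_pos (Nat.zero_le m), Nat.sub_zero]
  exact MvPolynomial.coeff_aeval_piSingle_X 1 (f.coeff 0) m

noncomputable def topPnh (n h : ℕ) (θ : ℝ) : ℝ[X] :=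
  C ((1 - θ) ^ h) * X ^ (2 * h + 1) * (X * (C θ * X + 1) ^ (2 * n))

noncomputable def topDnh (n h : ℕ) (θ : ℝ) : ℝ[X] :=
  C (θ ^ (h + 1)) * X ^ (2 * h + 1) * (X + 1) ^ (n + h + 1)

lemma hasTopCoeff_blowUp_Pnh (n h : ℕ) (θ : ℝ) :
    HasTopCoeff (Φ (Pnh n h θ)) (2 * n + 2 * h + 2) (topPnh n h θ) := by
  obtain ⟨h₁, h₂, h₃, h₄, h₅⟩ : HasTopCoeff (Φ (X - 2 * Jv - 1)) 1 X ∧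
      HasTopCoeff (Φ (X + 2 * (h : Polynomial R2) - 2 * Jv - 1)) 1 X ∧
      HasTopCoeff (Φ (X - Jv)) 1 X ∧
      HasTopCoeff (Φ (cst (1 - θ) * X - Jv)) 1 (C (1 - θ) * X) ∧
      HasTopCoeff (Φ (cst θ * X + (h : Polynomial R2) - (n : Polynomial R2) - Jv + Kv)) 1
        (C θ * X + 1) := by
    refine ⟨?_, ?_, ?_, ?_, ?_⟩ <;>
    simp only [map_add, map_sub, map_mul, map_one, map_natCast, blowUp_X, blowUp_Jv, blowUp_Kv,
      blowUp_cst, two_mul, sub_zero] <;>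
    exact ⟨by compute_degree, by simp [sub_mul, coeff_one, coeff_natCast_ite, coeff_C]⟩
  have := ((((h₁.mul h₂).mul (h₃.rfp h)).mul (h₄.rfp h)).mul (h₅.rfp n)).mul (h₅.rfp n)
  rw [Pnh]
  convert this using 1
  · simp only [map_mul, map_rfp]
  · ring
  · rw [topPnh, C_pow]; ring

lemma hasTopCoeff_blowUp_Dnh (n h : ℕ) (θ : ℝ) :
    HasTopCoeff (Φ (Dnh n h θ)) (n + 3 * h + 2) (topDnh n h θ) := by
  have h₁ : HasTopCoeff (Φ (cst θ * X ^ h)) h (C θ * X ^ h) := by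
    simp only [map_mul, map_pow, blowUp_cst, blowUp_X]
    exact ⟨by compute_degree,
      by rw [mul_pow, ← mul_assoc, ← C_pow, ← C_mul, coeff_C_mul_X_pow, if_pos rfl]⟩
  obtain ⟨h₂, h₃, h₄⟩ : HasTopCoeff (Φ (X + (h : Polynomial R2) - 2 * Jv - 1)) 1 X ∧
      HasTopCoeff (Φ (cst θ * X - Jv)) 1 (C θ * X) ∧
      HasTopCoeff (Φ (X - (n : Polynomial R2) + (h : Polynomial R2) - 2 * Jv - 1 + Kv)) 1
        (X + 1) := by
    refine ⟨?_, ?_, ?_⟩ <;>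
    simp only [map_add, map_sub, map_mul, map_one, map_natCast, blowUp_X, blowUp_Jv, blowUp_Kv,
      blowUp_cst, two_mul, sub_zero] <;>
    exact ⟨by compute_degree, by simp [coeff_one, coeff_natCast_ite, coeff_C]⟩
  have := ((h₁.mul h₂).mul (h₃.rfp h)).mul (h₄.rfp (n + h + 1))
  rw [Dnh]
  convert this using 1
  · simp only [map_mul, map_rfp]
  · ring
  · rw [topDnh, C_pow]; ring

lemma degree_topDnh (n h : ℕ) {θ : ℝ} (hθ : θ ≠ 0) :
    (topDnh n h θ).degree = ↑(n + 3 * h + 2) := by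
  rw [topDnh, degree_mul, degree_mul, degree_C (pow_ne_zero _ hθ), degree_X_pow, degree_pow,
    ← C_1, degree_X_add_C, zero_add, nsmul_one, ← Nat.cast_add]
  congr 1
  ring

lemma exists_topPnh_eq_topDnh_mul_add {n h : ℕ} (hn : 1 ≤ n) (hhn : h ≤ n) {θ : ℝ}
    (hθ : θ ≠ 0) :
    ∃ q r : ℝ[X], topPnh n h θ = topDnh n h θ * q + r ∧
      r.degree < (topDnh n h θ).degree ∧
      q.eval 0 = (1 - θ) ^ n * θ ^ (n - 1) * (2 * n).choose (n - h) := by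
  obtain ⟨q, r, hqr, hr, hq⟩ :=
    exists_X_mul_comp_X_add_one_eq ((C θ * X + C (1 - θ)) ^ (2 * n)) (n + h)
  have hcomp : ((C θ * X + C (1 - θ)) ^ (2 * n)).comp (X + 1) = (C θ * X + 1) ^ (2 * n) := by
    rw [pow_comp, add_comp, mul_comp, C_comp, C_comp, X_comp, C_sub, C_1]; ring
  rw [hcomp] at hqr
  have hθh : θ ^ (h + 1) ≠ 0 := pow_ne_zero _ hθ
  refine ⟨C ((1 - θ) ^ h / θ ^ (h + 1)) * q, C ((1 - θ) ^ h) * X ^ (2 * h + 1) * r,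
    ?_, ?_, ?_⟩
  · have hC : C (θ ^ (h + 1)) * C ((1 - θ) ^ h / θ ^ (h + 1)) = C ((1 - θ) ^ h) := by
      rw [← C_mul, mul_div_cancel₀ _ hθh]
    rw [topPnh, topDnh, hqr]
    linear_combination (-(X ^ (2 * h + 1) * (X + 1) ^ (n + h + 1) * q)) * hC
  · have := natDegree_mul_le_of_le (natDegree_C_mul_X_pow_le ((1 - θ) ^ h) (2 * h + 1)) hr
    rw [degree_topDnh n h hθ]
    exact degree_le_natDegree.trans_lt (by exact_mod_cast (show _ < n + 3 * h + 2 by omega))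
  · rw [eval_mul, eval_C, hq, coeff_C_mul_X_add_C_pow, show 2 * n - (n + h) = n - h by omega,
      ← Nat.choose_symm (by omega : n + h ≤ 2 * n), show 2 * n - (n + h) = n - h by omega,
      show n + h = h + 1 + (n - 1) by omega, ← pow_mul_pow_sub (1 - θ) hhn]
    field_simp
    ring

theorem stmt_14_general (n h : ℕ) (hn : 1 ≤ n) (hhn : h ≤ n)
    (th : ℝ) (hth0 : 0 < th)
    (Q Rem : Polynomial R2)
    (hdiv : Pnh n h th = Dnh n h th * Q + Rem)
    (hRem : Rem.degree < ((n + 3 * h + 2 : ℕ) : WithBot ℕ)) :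
    MvPolynomial.coeff (Finsupp.single (1 : Fin 2) (n - h)) (Q.coeff 0)
      = (1 - th) ^ n * th ^ (n - 1) * ((2 * n).choose (n - h) : ℝ) := by
  obtain ⟨hP, hTP⟩ := hasTopCoeff_blowUp_Pnh n h th
  obtain ⟨hD, hTD⟩ := hasTopCoeff_blowUp_Dnh n h th
  have hDdeg := degree_topDnh n h hth0.ne'
  have hQ := natDegree_blowUp_quotient_le setJZero hdiv hRem hD (hTD ▸ hDdeg) hP
  have key := coeff_blowUp_eq_mul_add setJZero hdiv hD hQ
  rw [show n + 3 * h + 2 + (2 * n + 2 * h + 2 - (n + 3 * h + 2)) = 2 * n + 2 * h + 2 by omega,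
    hTP, hTD] at key
  obtain ⟨q, r, hqr, hr, hq⟩ := exists_topPnh_eq_topDnh_mul_add hn hhn hth0.ne'
  have hTQ := eq_of_mul_add_eq_mul_add (key.symm.trans hqr)
    (hDdeg ▸ (degree_coeff_blowUp_le _ _ _).trans_lt hRem) hr
  rw [show 2 * n + 2 * h + 2 - (n + 3 * h + 2) = n - h by omega] at hTQ
  rw [← coeff_zero_coeff_blowUp_setJZero, hTQ, coeff_zero_eq_eval_zero, hq]

/-- For `λ = 1`, the coefficient `c^{(1,θ)}_{n,h,h−1}` of the monomial `k^{n−h}` in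
`q^{(n,h)}_{n−h} = Q.coeff 0` equals `(1−θ)^n θ^{n−1} C(2n, n−h)`. -/
theorem stmt_14 (n h : ℕ) (hn : 1 ≤ n) (hh1 : 1 ≤ h) (hhn : h ≤ n)
    (th : ℝ) (hth0 : 0 < th) (hth1 : th < 1)
    (Q Rem : Polynomial R2)
    (hdiv : Pnh n h th = Dnh n h th * Q + Rem)
    (hRem : Rem.degree < ((n + 3 * h + 2 : ℕ) : WithBot ℕ)) :
    MvPolynomial.coeff (Finsupp.single (1 : Fin 2) (n - h)) (Q.coeff 0)
      = (1 - th) ^ n * th ^ (n - 1) * ((2 * n).choose (n - h) : ℝ) :=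
  stmt_14_general n h hn hhn th hth0 Q Rem hdiv hRem
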